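/- Let a, b > 0 and define f : ℝ²∖{0} → ℝ by f(x,y) = a·x + b·x/(x²+y²). Then f has exactly two critical points, located at (√(b/a), 0) and (−√(b/a), 0), and at each of these points the Hessian of f is invertible with negative determinant (a nondegenerate saddle). -/

import Mathlib

/-!
Write `z = x + iy`. Then `f = a x + b Re(1/z)`, and `Re(1/z)` is harmonic, so the Hessian of `f`
is trace-free with determinant `-|d²(b/z)/dz²|² = -4b²/|z|⁶ < 0` at every point of the punctured
plane. For the critical points, `∂f/∂y = -2bxy/|z|⁴` vanishes only on the axes; on the `y`-axis
`∂f/∂x = a + b/y² > 0`, and on the `x`-axis `∂f/∂x = a - b/x²` vanishes exactly at `x² = b/a`.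
-/

open Matrix Topology

lemma sq_add_sq_ne_zero_of_ne {x y : ℝ} (h : (x, y) ≠ (0, 0)) : x ^ 2 + y ^ 2 ≠ 0 := by
  contrapose! h
  have hx : x = 0 := by nlinarith [sq_nonneg x, sq_nonneg y]
  have hy : y = 0 := by nlinarith [sq_nonneg x, sq_nonneg y]
  rw [hx, hy]

section Partials

variable (a b x y : ℝ)

lemma hasDerivAt_partial_x (h : x ^ 2 + y ^ 2 ≠ 0) :
    HasDerivAt (fun x' : ℝ => a * x' + b * x' / (x' ^ 2 + y ^ 2))
      (a + b * (y ^ 2 - x ^ 2) / (x ^ 2 + y ^ 2) ^ 2) x := by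
  refine (((hasDerivAt_id x).const_mul a).add
    (((hasDerivAt_id x).const_mul b).div ((hasDerivAt_pow 2 x).add_const (y ^ 2)) h)).congr_deriv ?_
  simp only [id]
  field_simp
  ring

lemma hasDerivAt_partial_y (h : x ^ 2 + y ^ 2 ≠ 0) :
    HasDerivAt (fun y' : ℝ => a * x + b * x / (x ^ 2 + y' ^ 2))
      (-(2 * b * x * y) / (x ^ 2 + y ^ 2) ^ 2) y := by
  refine ((hasDerivAt_const y (a * x)).add
    ((hasDerivAt_const y (b * x)).div ((hasDerivAt_pow 2 y).const_add (x ^ 2)) h)).congr_deriv ?_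
  field_simp
  ring

lemma eventually_sq_add_sq_ne_zero_left (h : x ^ 2 + y ^ 2 ≠ 0) :
    ∀ᶠ t in 𝓝 x, t ^ 2 + y ^ 2 ≠ 0 :=
  (by fun_prop : Continuous fun t : ℝ => t ^ 2 + y ^ 2).continuousAt.eventually_ne h

lemma eventually_sq_add_sq_ne_zero_right (h : x ^ 2 + y ^ 2 ≠ 0) :
    ∀ᶠ t in 𝓝 y, x ^ 2 + t ^ 2 ≠ 0 :=
  (by fun_prop : Continuous fun t : ℝ => x ^ 2 + t ^ 2).continuousAt.eventually_ne h

lemma hessian_xx (h : x ^ 2 + y ^ 2 ≠ 0) :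
    deriv (fun x' : ℝ => deriv (fun x'' : ℝ => a * x'' + b * x'' / (x'' ^ 2 + y ^ 2)) x') x =
      2 * b * x * (x ^ 2 - 3 * y ^ 2) / (x ^ 2 + y ^ 2) ^ 3 := by
  have hd : HasDerivAt (fun x' : ℝ => a + b * (y ^ 2 - x' ^ 2) / (x' ^ 2 + y ^ 2) ^ 2)
      (2 * b * x * (x ^ 2 - 3 * y ^ 2) / (x ^ 2 + y ^ 2) ^ 3) x := by
    refine ((((hasDerivAt_pow 2 x).const_sub (y ^ 2)).const_mul b).div
      (((hasDerivAt_pow 2 x).add_const (y ^ 2)).pow 2) (pow_ne_zero 2 h) |>.const_add a).congr_deriv ?_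
    simp only [Pi.pow_apply]
    field_simp
    ring
  exact (hd.congr_of_eventuallyEq <| (eventually_sq_add_sq_ne_zero_left x y h).mono
    fun x' hx' => (hasDerivAt_partial_x a b x' y hx').deriv).deriv

lemma hessian_xy (h : x ^ 2 + y ^ 2 ≠ 0) :
    deriv (fun y' : ℝ => deriv (fun x' : ℝ => a * x' + b * x' / (x' ^ 2 + y' ^ 2)) x) y =
      2 * b * y * (3 * x ^ 2 - y ^ 2) / (x ^ 2 + y ^ 2) ^ 3 := by
  have hd : HasDerivAt (fun y' : ℝ => a + b * (y' ^ 2 - x ^ 2) / (x ^ 2 + y' ^ 2) ^ 2)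
      (2 * b * y * (3 * x ^ 2 - y ^ 2) / (x ^ 2 + y ^ 2) ^ 3) y := by
    refine ((((hasDerivAt_pow 2 y).sub_const (x ^ 2)).const_mul b).div
      (((hasDerivAt_pow 2 y).const_add (x ^ 2)).pow 2) (pow_ne_zero 2 h) |>.const_add a).congr_deriv ?_
    simp only [Pi.pow_apply]
    field_simp
    ring
  exact (hd.congr_of_eventuallyEq <| (eventually_sq_add_sq_ne_zero_right x y h).mono
    fun y' hy' => (hasDerivAt_partial_x a b x y' hy').deriv).deriv

lemma hessian_yx (h : x ^ 2 + y ^ 2 ≠ 0) :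
    deriv (fun x' : ℝ => deriv (fun y' : ℝ => a * x' + b * x' / (x' ^ 2 + y' ^ 2)) y) x =
      2 * b * y * (3 * x ^ 2 - y ^ 2) / (x ^ 2 + y ^ 2) ^ 3 := by
  have hd : HasDerivAt (fun x' : ℝ => -(2 * b * x' * y) / (x' ^ 2 + y ^ 2) ^ 2)
      (2 * b * y * (3 * x ^ 2 - y ^ 2) / (x ^ 2 + y ^ 2) ^ 3) x := by
    refine ((((hasDerivAt_id x).const_mul (2 * b)).mul_const y).neg.div
      (((hasDerivAt_pow 2 x).add_const (y ^ 2)).pow 2) (pow_ne_zero 2 h)).congr_deriv ?_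
    simp only [id, Pi.pow_apply, Pi.neg_apply]
    field_simp
    ring
  exact (hd.congr_of_eventuallyEq <| (eventually_sq_add_sq_ne_zero_left x y h).mono
    fun x' hx' => (hasDerivAt_partial_y a b x' y hx').deriv).deriv

lemma hessian_yy (h : x ^ 2 + y ^ 2 ≠ 0) :
    deriv (fun y' : ℝ => deriv (fun y'' : ℝ => a * x + b * x / (x ^ 2 + y'' ^ 2)) y') y =
      -(2 * b * x * (x ^ 2 - 3 * y ^ 2)) / (x ^ 2 + y ^ 2) ^ 3 := by
  have hd : HasDerivAt (fun y' : ℝ => -(2 * b * x * y') / (x ^ 2 + y' ^ 2) ^ 2)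
      (-(2 * b * x * (x ^ 2 - 3 * y ^ 2)) / (x ^ 2 + y ^ 2) ^ 3) y := by
    refine (((hasDerivAt_id y).const_mul (2 * b * x)).neg.div
      (((hasDerivAt_pow 2 y).const_add (x ^ 2)).pow 2) (pow_ne_zero 2 h)).congr_deriv ?_
    simp only [id, Pi.pow_apply, Pi.neg_apply]
    field_simp
    ring
  exact (hd.congr_of_eventuallyEq <| (eventually_sq_add_sq_ne_zero_right x y h).mono
    fun y' hy' => (hasDerivAt_partial_y a b x y' hy').deriv).deriv

lemma hessian_det_eq (h : x ^ 2 + y ^ 2 ≠ 0) :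
    (!![deriv (fun x' : ℝ => deriv (fun x'' : ℝ =>
            a * x'' + b * x'' / (x'' ^ 2 + y ^ 2)) x') x,
          deriv (fun x' : ℝ => deriv (fun y' : ℝ =>
            a * x' + b * x' / (x' ^ 2 + y' ^ 2)) y) x;
          deriv (fun y' : ℝ => deriv (fun x' : ℝ =>
            a * x' + b * x' / (x' ^ 2 + y' ^ 2)) x) y,
          deriv (fun y' : ℝ => deriv (fun y'' : ℝ =>
            a * x + b * x / (x ^ 2 + y'' ^ 2)) y') y] :
        Matrix (Fin 2) (Fin 2) ℝ).det = -(4 * b ^ 2) / (x ^ 2 + y ^ 2) ^ 3 := by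
  rw [det_fin_two_of, hessian_xx a b x y h, hessian_xy a b x y h, hessian_yx a b x y h,
    hessian_yy a b x y h]
  field_simp
  ring

end Partials

lemma partials_eq_zero_iff {a b x y : ℝ} (ha : 0 < a) (hb : 0 < b) (h : x ^ 2 + y ^ 2 ≠ 0) :
    (a + b * (y ^ 2 - x ^ 2) / (x ^ 2 + y ^ 2) ^ 2 = 0 ∧
        -(2 * b * x * y) / (x ^ 2 + y ^ 2) ^ 2 = 0) ↔
      y = 0 ∧ x ^ 2 = b / a := by
  constructor
  · rintro ⟨hfx, hfy⟩
    have hxy : x = 0 ∨ y = 0 := by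
      simpa [pow_ne_zero 2 h, hb.ne', or_assoc] using hfy
    rcases hxy with rfl | rfl
    · refine absurd hfx (ne_of_gt ?_)
      norm_num
      positivity
    · have hx : x ≠ 0 := by simpa using h
      refine ⟨rfl, ?_⟩
      norm_num at hfx
      field_simp at hfx ⊢
      linarith
  · rintro ⟨rfl, hx⟩
    refine ⟨?_, by simp⟩
    field_simp
    rw [hx]
    field_simp
    ring

theorem annulus_eigenfunction_critical_points (a b : ℝ) (ha : 0 < a) (hb : 0 < b) :
    (∀ x y : ℝ, (x, y) ≠ ((0 : ℝ), (0 : ℝ)) →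
      ((deriv (fun x' : ℝ => a * x' + b * x' / (x' ^ 2 + y ^ 2)) x = 0 ∧
        deriv (fun y' : ℝ => a * x + b * x / (x ^ 2 + y' ^ 2)) y = 0) ↔
       ((x, y) = (Real.sqrt (b / a), (0 : ℝ)) ∨ (x, y) = (-Real.sqrt (b / a), (0 : ℝ))))) ∧
    (∀ x y : ℝ,
      ((x, y) = (Real.sqrt (b / a), (0 : ℝ)) ∨ (x, y) = (-Real.sqrt (b / a), (0 : ℝ))) →
      (!![deriv (fun x' : ℝ => deriv (fun x'' : ℝ =>
            a * x'' + b * x'' / (x'' ^ 2 + y ^ 2)) x') x,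
          deriv (fun x' : ℝ => deriv (fun y' : ℝ =>
            a * x' + b * x' / (x' ^ 2 + y' ^ 2)) y) x;
          deriv (fun y' : ℝ => deriv (fun x' : ℝ =>
            a * x' + b * x' / (x' ^ 2 + y' ^ 2)) x) y,
          deriv (fun y' : ℝ => deriv (fun y'' : ℝ =>
            a * x + b * x / (x ^ 2 + y'' ^ 2)) y') y] :
        Matrix (Fin 2) (Fin 2) ℝ).det < 0) := by
  have hba : 0 < b / a := div_pos hb ha
  have on_axis : ∀ x y : ℝ, (y = 0 ∧ x ^ 2 = b / a) ↔
      ((x, y) = (Real.sqrt (b / a), 0) ∨ (x, y) = (-Real.sqrt (b / a), 0)) := by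
    intro x y
    have hx : x ^ 2 = b / a ↔ x = Real.sqrt (b / a) ∨ x = -Real.sqrt (b / a) := by
      rw [← sq_eq_sq_iff_eq_or_eq_neg, Real.sq_sqrt hba.le]
    simp only [Prod.mk.injEq, hx]
    tauto
  refine ⟨fun x y hxy => ?_, fun x y hcrit => ?_⟩
  · have h := sq_add_sq_ne_zero_of_ne hxy
    rw [(hasDerivAt_partial_x a b x y h).deriv, (hasDerivAt_partial_y a b x y h).deriv,
      partials_eq_zero_iff ha hb h, on_axis]
  · obtain ⟨rfl, hx⟩ := (on_axis x y).2 hcrit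
    have h : x ^ 2 + 0 ^ 2 ≠ 0 := by simpa [hx] using hba.ne'
    rw [hessian_det_eq a b x 0 h]
    exact div_neg_of_neg_of_pos (neg_neg_of_pos (by positivity)) (by positivity)
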